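/- arXiv:2403.06190 — 5 statements merged into one kernel-verified Lean document; each statement's English description precedes it below -/
import Mathlib

section
/- Let M be a square-integrable random variable with M > 0 almost surely, E[M] = m₁ > 0 and Var(M) = m₂ > 0, and let x₀ ∈ ℝ, θ > 0. Among all square-integrable random variables X with E[MX] = x₀ and E[X] = d, the maximum of d − (θ/2)·E[(X − d)²] is attained at X = d + (d·m₁ − x₀)(m₁ − M)/m₂. -/
open MeasureTheory ProbabilityTheory

private lemma l2_mul_integrable {Ω : Type*} [MeasurableSpace Ω] {P : Measure Ω}
    [IsFiniteMeasure P]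
    {f g : Ω → ℝ} (hf : MemLp f 2 P) (hg : MemLp g 2 P) :
    Integrable (fun ω => f ω * g ω) P := by
  have h : MemLp (f • g) 1 P := hg.smul hf
  exact h.integrable le_rfl

/-- In a complete market with pricing kernel `M > 0` a.s., among all square-integrable
claims `X` with budget `E[M X] = x₀` and prescribed mean `E[X] = d`, the mean-variance
objective `d − (θ/2) E[(X − d)²]` is maximized at
`X* = d + (d m₁ − x₀)(m₁ − M)/m₂`. -/
theorem stmt_0 {Ω : Type*} [MeasurableSpace Ω] (P : Measure Ω) [IsProbabilityMeasure P]
    (M : Ω → ℝ) (hM2 : MemLp M 2 P) (hMpos : ∀ᵐ ω ∂P, 0 < M ω)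
    (m₁ m₂ x₀ θ d : ℝ)
    (hm₁ : ∫ ω, M ω ∂P = m₁) (hm₁pos : 0 < m₁)
    (hm₂ : variance M P = m₂) (hm₂pos : 0 < m₂) (hθ : 0 < θ) :
    (∫ ω, M ω * (d + (d * m₁ - x₀) * (m₁ - M ω) / m₂) ∂P = x₀) ∧
    (∫ ω, (d + (d * m₁ - x₀) * (m₁ - M ω) / m₂) ∂P = d) ∧
    (∀ X : Ω → ℝ, MemLp X 2 P → (∫ ω, M ω * X ω ∂P = x₀) → (∫ ω, X ω ∂P = d) →
      d - θ / 2 * ∫ ω, (X ω - d) ^ 2 ∂P ≤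
        d - θ / 2 * ∫ ω, ((d + (d * m₁ - x₀) * (m₁ - M ω) / m₂) - d) ^ 2 ∂P) := by
  have hm₂ne : m₂ ≠ 0 := ne_of_gt hm₂pos
  set c : ℝ := (d * m₁ - x₀) / m₂ with hc
  have hcm₂ : c * m₂ = d * m₁ - x₀ := div_mul_cancel₀ _ hm₂ne
  have hMint : Integrable M P := hM2.integrable one_le_two
  have hM2int : Integrable (fun ω => M ω ^ 2) P := by
    have := hM2.integrable_sq
    simpa using this
  have hIM2 : ∫ ω, M ω ^ 2 ∂P = m₂ + m₁ ^ 2 := by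
    have h := variance_eq_sub hM2
    simp only [Pi.pow_apply] at h
    rw [hm₂, hm₁] at h
    linarith
  -- first part
  have part1 : ∫ ω, M ω * (d + (d * m₁ - x₀) * (m₁ - M ω) / m₂) ∂P = x₀ := by
    have heq : ∀ ω, M ω * (d + (d * m₁ - x₀) * (m₁ - M ω) / m₂)
        = (d + c * m₁) * M ω - c * M ω ^ 2 := by
      intro ω; rw [hc]; field_simp; ring
    rw [show (fun ω => M ω * (d + (d * m₁ - x₀) * (m₁ - M ω) / m₂))
        = fun ω => (d + c * m₁) * M ω - c * M ω ^ 2 from funext heq]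
    rw [integral_sub (hMint.const_mul _) (hM2int.const_mul _),
      integral_const_mul, integral_const_mul, hm₁, hIM2]
    have : c * (m₂ + m₁ ^ 2) = (d * m₁ - x₀) + c * m₁ ^ 2 := by
      rw [mul_add, hcm₂]
    nlinarith [hcm₂]
  have part2 : ∫ ω, (d + (d * m₁ - x₀) * (m₁ - M ω) / m₂) ∂P = d := by
    have heq : ∀ ω, (d + (d * m₁ - x₀) * (m₁ - M ω) / m₂)
        = (d + c * m₁) - c * M ω := by
      intro ω; rw [hc]; field_simp; ring
    rw [show (fun ω => (d + (d * m₁ - x₀) * (m₁ - M ω) / m₂))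
        = fun ω => (d + c * m₁) - c * M ω from funext heq]
    rw [integral_sub (integrable_const _) (hMint.const_mul _),
      integral_const, integral_const_mul, hm₁]
    simp
  refine ⟨part1, part2, ?_⟩
  intro X hX2 hbudget hmean
  -- reduce to the key inequality on second moments
  have hYstar2 : ∫ ω, ((d + (d * m₁ - x₀) * (m₁ - M ω) / m₂) - d) ^ 2 ∂P
      = c ^ 2 * m₂ := by
    have heq : ∀ ω, ((d + (d * m₁ - x₀) * (m₁ - M ω) / m₂) - d) ^ 2
        = c ^ 2 * M ω ^ 2 - (2 * c ^ 2 * m₁) * M ω + c ^ 2 * m₁ ^ 2 := by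
      intro ω; rw [hc]; field_simp; ring
    rw [show (fun ω => ((d + (d * m₁ - x₀) * (m₁ - M ω) / m₂) - d) ^ 2)
        = fun ω => c ^ 2 * M ω ^ 2 - (2 * c ^ 2 * m₁) * M ω + c ^ 2 * m₁ ^ 2 from
        funext heq]
    have hiA : Integrable (fun ω => c ^ 2 * M ω ^ 2 - (2 * c ^ 2 * m₁) * M ω) P :=
      (hM2int.const_mul _).sub (hMint.const_mul _)
    rw [integral_add hiA (integrable_const _),
      integral_sub (hM2int.const_mul _) (hMint.const_mul _),
      integral_const_mul, integral_const_mul, integral_const, hm₁, hIM2]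
    simp; ring
  have key : c ^ 2 * m₂ ≤ ∫ ω, (X ω - d) ^ 2 ∂P := by
    -- set Y = X - d
    have hY2 : MemLp (fun ω => X ω - d) 2 P := hX2.sub (memLp_const d)
    have hYsq : Integrable (fun ω => (X ω - d) ^ 2) P := by
      have := hY2.integrable_sq; simpa using this
    have hYint : Integrable (fun ω => X ω - d) P :=
      (hX2.integrable one_le_two).sub (integrable_const d)
    have hMY : Integrable (fun ω => M ω * (X ω - d)) P := l2_mul_integrable hM2 hY2
    have hIY : ∫ ω, (X ω - d) ∂P = 0 := by
      rw [integral_sub (hX2.integrable one_le_two) (integrable_const d), hmean,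
        integral_const]
      simp
    have hIMY : ∫ ω, M ω * (X ω - d) ∂P = x₀ - d * m₁ := by
      have heq : ∀ ω, M ω * (X ω - d) = M ω * X ω - d * M ω := fun ω => by ring
      rw [show (fun ω => M ω * (X ω - d)) = fun ω => M ω * X ω - d * M ω from funext heq,
        integral_sub (l2_mul_integrable hM2 hX2) (hMint.const_mul _),
        integral_const_mul, hm₁, hbudget]
    -- 0 ≤ ∫ ((X - d) - c(m₁ - M))²
    have hnn : 0 ≤ ∫ ω, ((X ω - d) - c * (m₁ - M ω)) ^ 2 ∂P :=
      integral_nonneg fun ω => sq_nonneg _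
    have hexp : ∫ ω, ((X ω - d) - c * (m₁ - M ω)) ^ 2 ∂P
        = ∫ ω, (X ω - d) ^ 2 ∂P
          - 2 * (c * m₁ * ∫ ω, (X ω - d) ∂P - c * ∫ ω, M ω * (X ω - d) ∂P)
          + (c ^ 2 * m₂) := by
      have heq : ∀ ω, ((X ω - d) - c * (m₁ - M ω)) ^ 2
          = (X ω - d) ^ 2
            - 2 * (c * m₁ * (X ω - d) - c * (M ω * (X ω - d)))
            + (c ^ 2 * M ω ^ 2 - (2 * c ^ 2 * m₁) * M ω + c ^ 2 * m₁ ^ 2) := by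
        intro ω; ring
      rw [show (fun ω => ((X ω - d) - c * (m₁ - M ω)) ^ 2)
          = fun ω => (X ω - d) ^ 2
            - 2 * (c * m₁ * (X ω - d) - c * (M ω * (X ω - d)))
            + (c ^ 2 * M ω ^ 2 - (2 * c ^ 2 * m₁) * M ω + c ^ 2 * m₁ ^ 2) from
          funext heq]
      have hi1 : Integrable (fun ω => c * m₁ * (X ω - d) - c * (M ω * (X ω - d))) P :=
        (hYint.const_mul _).sub (hMY.const_mul _)
      have hi3 : Integrable
          (fun ω => c ^ 2 * M ω ^ 2 - (2 * c ^ 2 * m₁) * M ω + c ^ 2 * m₁ ^ 2) P :=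
        ((hM2int.const_mul _).sub (hMint.const_mul _)).add (integrable_const _)
      have hi1' : Integrable
          (fun ω => 2 * (c * m₁ * (X ω - d) - c * (M ω * (X ω - d)))) P :=
        hi1.const_mul 2
      have hiB : Integrable (fun ω => (X ω - d) ^ 2
          - 2 * (c * m₁ * (X ω - d) - c * (M ω * (X ω - d)))) P := hYsq.sub hi1'
      have hiC : Integrable (fun ω => c ^ 2 * M ω ^ 2 - (2 * c ^ 2 * m₁) * M ω) P :=
        (hM2int.const_mul _).sub (hMint.const_mul _)
      rw [integral_add hiB hi3,
        integral_sub hYsq hi1', integral_const_mul,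
        integral_sub (hYint.const_mul _) (hMY.const_mul _),
        integral_const_mul, integral_const_mul,
        integral_add hiC (integrable_const _),
        integral_sub (hM2int.const_mul _) (hMint.const_mul _),
        integral_const_mul, integral_const_mul, integral_const, hm₁, hIM2]
      simp; ring
    rw [hexp, hIY, hIMY] at hnn
    have hc2 : c * (x₀ - d * m₁) = -(c ^ 2 * m₂) := by
      have : c * (x₀ - d * m₁) = -(c * (c * m₂)) := by rw [hcm₂]; ring
      rw [this]; ring
    nlinarith [hnn]
  rw [hYstar2]
  have hθ2 : (0:ℝ) ≤ θ / 2 := by positivity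
  nlinarith [mul_le_mul_of_nonneg_left key hθ2]
end

section
/- Let θ > 0 and X ∈ L²(P). The monotone mean-variance functional V_θ(X) = inf over nonnegative Y ∈ L²(P) with E[Y]=1 of E[XY + Y²/(2θ) − 1/(2θ)] satisfies V_θ(X) ≥ U_θ(X) = E[X] − (θ/2)Var(X), with equality whenever 1 − θ(X − E[X]) ≥ 0 almost surely. -/
open MeasureTheory ProbabilityTheory

private lemma int_mul_of_memL2 {Ω : Type*} [MeasurableSpace Ω] {P : Measure Ω}
    {f g : Ω → ℝ} (hf : MemLp f 2 P) (hg : MemLp g 2 P) :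
    Integrable (fun ω => f ω * g ω) P := by
  have h : Integrable (fun ω => ((f ω + g ω) ^ 2 - f ω ^ 2 - g ω ^ 2) / 2) P :=
    (((hf.add hg).integrable_sq.sub hf.integrable_sq).sub hg.integrable_sq).div_const 2
  exact h.congr (Filter.Eventually.of_forall fun ω => by ring)

/-- The monotone mean-variance functional
`V_θ(X) = inf {E[XY + Y²/(2θ) − 1/(2θ)] : Y ∈ L², Y ≥ 0 a.s., E[Y] = 1}`
satisfies `V_θ(X) ≥ U_θ(X) = E[X] − (θ/2)Var(X)`, with equality whenever
`1 − θ(X − E[X]) ≥ 0` a.s. -/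
theorem stmt_4 {Ω : Type*} [MeasurableSpace Ω] (P : Measure Ω) [IsProbabilityMeasure P]
    (X : Ω → ℝ) (hX : MemLp X 2 P) (θ : ℝ) (hθ : 0 < θ) :
    (∫ ω, X ω ∂P) - θ / 2 * variance X P ≤
      sInf {r : ℝ | ∃ Y : Ω → ℝ, MemLp Y 2 P ∧ (∀ᵐ ω ∂P, 0 ≤ Y ω) ∧
          (∫ ω, Y ω ∂P = 1) ∧
          r = ∫ ω, (X ω * Y ω + (Y ω) ^ 2 / (2 * θ) - 1 / (2 * θ)) ∂P} ∧
    ((∀ᵐ ω ∂P, 0 ≤ 1 - θ * (X ω - ∫ ω', X ω' ∂P)) →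
      sInf {r : ℝ | ∃ Y : Ω → ℝ, MemLp Y 2 P ∧ (∀ᵐ ω ∂P, 0 ≤ Y ω) ∧
          (∫ ω, Y ω ∂P = 1) ∧
          r = ∫ ω, (X ω * Y ω + (Y ω) ^ 2 / (2 * θ) - 1 / (2 * θ)) ∂P}
        = (∫ ω, X ω ∂P) - θ / 2 * variance X P) := by
  set m := ∫ ω, X ω ∂P with hm
  have hθ' : θ ≠ 0 := ne_of_gt hθ
  have hXint : Integrable X P := hX.integrable one_le_two
  have hZ : MemLp (fun ω => X ω - m) 2 P := hX.sub (memLp_const m)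
  have hZint : Integrable (fun ω => X ω - m) P := hXint.sub (integrable_const m)
  have hZsq : Integrable (fun ω => (X ω - m) ^ 2) P := hZ.integrable_sq
  have hZint0 : ∫ ω, (X ω - m) ∂P = 0 := by
    rw [integral_sub hXint (integrable_const m), integral_const]
    simp [hm]
  have hvar : variance X P = ∫ ω, (X ω - m) ^ 2 ∂P := by
    have := variance_eq_integral hX.aestronglyMeasurable.aemeasurable
    simpa [Pi.sub_apply, Pi.pow_apply] using this
  -- main identity for any admissible Y
  have main : ∀ Y : Ω → ℝ, MemLp Y 2 P → (∫ ω, Y ω ∂P = 1) →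
      ∫ ω, (X ω * Y ω + (Y ω) ^ 2 / (2 * θ) - 1 / (2 * θ)) ∂P
        = (∫ ω, (Y ω + θ * (X ω - m) - 1) ^ 2 ∂P) / (2 * θ)
          + (m - θ / 2 * variance X P) := by
    intro Y hY hEY
    have hYint : Integrable Y P := hY.integrable one_le_two
    have hW : MemLp (fun ω => Y ω + θ * (X ω - m) - 1) 2 P :=
      (hY.add (hZ.const_mul θ)).sub (memLp_const 1)
    have hWsq : Integrable (fun ω => (Y ω + θ * (X ω - m) - 1) ^ 2) P := hW.integrable_sq
    have hXY : Integrable (fun ω => X ω * Y ω) P := int_mul_of_memL2 hX hY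
    have hh : Integrable (fun ω =>
        (m + 1 / θ) * Y ω + (X ω - m) - θ / 2 * (X ω - m) ^ 2 - 1 / θ) P :=
      (((hYint.const_mul (m + 1 / θ)).add hZint).sub (hZsq.const_mul (θ / 2))).sub
        (integrable_const (1 / θ))
    have hid : ∀ ω, X ω * Y ω + (Y ω) ^ 2 / (2 * θ) - 1 / (2 * θ)
        = (Y ω + θ * (X ω - m) - 1) ^ 2 / (2 * θ)
          + ((m + 1 / θ) * Y ω + (X ω - m) - θ / 2 * (X ω - m) ^ 2 - 1 / θ) := by
      intro ω; field_simp; ring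
    have hA : Integrable (fun ω => (m + 1 / θ) * Y ω + (X ω - m)) P :=
      (hYint.const_mul (m + 1 / θ)).add hZint
    have hB : Integrable (fun ω => (m + 1 / θ) * Y ω + (X ω - m) - θ / 2 * (X ω - m) ^ 2) P :=
      hA.sub (hZsq.const_mul (θ / 2))
    rw [integral_congr_ae (Filter.Eventually.of_forall hid),
      integral_add (hWsq.div_const (2 * θ)) hh, integral_div]
    congr 1
    rw [integral_sub hB (integrable_const (1 / θ)),
      integral_sub hA (hZsq.const_mul (θ / 2)),
      integral_add (hYint.const_mul (m + 1 / θ)) hZint,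
      integral_const_mul, integral_const_mul, hEY, hZint0, integral_const, hvar]
    simp
    field_simp
    ring
  -- the lower bound
  have lb : ∀ r ∈ {r : ℝ | ∃ Y : Ω → ℝ, MemLp Y 2 P ∧ (∀ᵐ ω ∂P, 0 ≤ Y ω) ∧
      (∫ ω, Y ω ∂P = 1) ∧
      r = ∫ ω, (X ω * Y ω + (Y ω) ^ 2 / (2 * θ) - 1 / (2 * θ)) ∂P},
      m - θ / 2 * variance X P ≤ r := by
    rintro r ⟨Y, hY, _, hEY, rfl⟩
    rw [main Y hY hEY]
    have h0 : 0 ≤ (∫ ω, (Y ω + θ * (X ω - m) - 1) ^ 2 ∂P) / (2 * θ) := by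
      apply div_nonneg _ (by positivity)
      exact integral_nonneg fun ω => sq_nonneg _
    linarith
  -- nonemptiness witness Y = 1
  have hone : (∫ ω, (1 : ℝ) ∂P) = 1 := by simp
  have hne : (∫ ω, (X ω * 1 + (1 : ℝ) ^ 2 / (2 * θ) - 1 / (2 * θ)) ∂P)
      ∈ {r : ℝ | ∃ Y : Ω → ℝ, MemLp Y 2 P ∧ (∀ᵐ ω ∂P, 0 ≤ Y ω) ∧
        (∫ ω, Y ω ∂P = 1) ∧
        r = ∫ ω, (X ω * Y ω + (Y ω) ^ 2 / (2 * θ) - 1 / (2 * θ)) ∂P} :=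
    ⟨fun _ => 1, memLp_const 1, Filter.Eventually.of_forall fun _ => zero_le_one, hone, rfl⟩
  constructor
  · exact le_csInf ⟨_, hne⟩ lb
  · intro hpos
    refine le_antisymm ?_ (le_csInf ⟨_, hne⟩ lb)
    set Y₀ : Ω → ℝ := fun ω => 1 - θ * (X ω - m) with hY₀def
    have hY₀ : MemLp Y₀ 2 P := (memLp_const 1).sub (hZ.const_mul θ)
    have hEY₀ : ∫ ω, Y₀ ω ∂P = 1 := by
      rw [hY₀def]
      rw [integral_sub (integrable_const 1) (hZint.const_mul θ), integral_const_mul, hZint0]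
      simp
    have hmem : (∫ ω, (X ω * Y₀ ω + (Y₀ ω) ^ 2 / (2 * θ) - 1 / (2 * θ)) ∂P)
        ∈ {r : ℝ | ∃ Y : Ω → ℝ, MemLp Y 2 P ∧ (∀ᵐ ω ∂P, 0 ≤ Y ω) ∧
          (∫ ω, Y ω ∂P = 1) ∧
          r = ∫ ω, (X ω * Y ω + (Y ω) ^ 2 / (2 * θ) - 1 / (2 * θ)) ∂P} :=
      ⟨Y₀, hY₀, hpos, hEY₀, rfl⟩
    have hval : ∫ ω, (X ω * Y₀ ω + (Y₀ ω) ^ 2 / (2 * θ) - 1 / (2 * θ)) ∂P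
        = m - θ / 2 * variance X P := by
      rw [main Y₀ hY₀ hEY₀]
      have : ∀ ω, (Y₀ ω + θ * (X ω - m) - 1) ^ 2 = 0 := by
        intro ω; rw [hY₀def]; ring
      rw [integral_congr_ae (Filter.Eventually.of_forall this)]
      simp
    calc sInf _ ≤ _ := csInf_le ⟨m - θ / 2 * variance X P, lb⟩ hmem
      _ = m - θ / 2 * variance X P := hval
end

section
/- Let θ > 0 and X ∈ L²(P). If P(X − E[X] > 1/θ) > 0, then V_θ(X) > U_θ(X), where U_θ(X) = E[X] − (θ/2)Var(X) and V_θ is the monotone mean-variance functional. -/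
open MeasureTheory ProbabilityTheory

/-- If `P(X − E[X] > 1/θ) > 0`, then the monotone mean-variance value `V_θ(X)` is
strictly larger than the mean-variance value `U_θ(X) = E[X] − (θ/2)Var(X)`. -/
theorem stmt_5 {Ω : Type*} [MeasurableSpace Ω] (P : Measure Ω) [IsProbabilityMeasure P]
    (X : Ω → ℝ) (hX : MemLp X 2 P) (θ : ℝ) (hθ : 0 < θ)
    (hpos : 0 < P {ω | X ω - (∫ ω', X ω' ∂P) > 1 / θ}) :
    (∫ ω, X ω ∂P) - θ / 2 * variance X P <
      sInf {r : ℝ | ∃ Y : Ω → ℝ, MemLp Y 2 P ∧ (∀ᵐ ω ∂P, 0 ≤ Y ω) ∧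
          (∫ ω, Y ω ∂P = 1) ∧
          r = ∫ ω, (X ω * Y ω + (Y ω) ^ 2 / (2 * θ) - 1 / (2 * θ)) ∂P} := by
  set m := ∫ ω', X ω' ∂P with hm
  have hXm : MemLp (fun ω => X ω - m) 2 P := hX.sub (memLp_const m)
  have hXint : Integrable X P := hX.integrable one_le_two
  have hXmint : Integrable (fun ω => X ω - m) P := hXm.integrable one_le_two
  have hXm2 : Integrable (fun ω => (X ω - m) ^ 2) P := hXm.integrable_sq
  -- the function t = θ(X-m) - 1 and its positive part g
  have hh : MemLp (fun ω => θ * (X ω - m) - 1) 2 P :=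
    (hXm.const_mul θ).sub (memLp_const 1)
  set g : Ω → ℝ := fun ω => max (θ * (X ω - m) - 1) 0 with hgdef
  have hgmem : MemLp g 2 P := hh.pos_part
  have hg2 : Integrable (fun ω => g ω ^ 2) P := hgmem.integrable_sq
  set δ := ∫ ω, g ω ^ 2 ∂P with hδ
  -- δ > 0
  have hδpos : 0 < δ := by
    rw [hδ, integral_pos_iff_support_of_nonneg_ae
      (Filter.Eventually.of_forall fun ω => sq_nonneg _) hg2]
    refine lt_of_lt_of_le hpos (measure_mono ?_)
    intro ω hω
    have h1 : 1 / θ < X ω - m := hω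
    have h2 : 0 < θ * (X ω - m) - 1 := by
      have := (div_lt_iff₀ hθ).mp h1
      nlinarith
    simp only [Function.mem_support, hgdef]
    have : max (θ * (X ω - m) - 1) 0 = θ * (X ω - m) - 1 := max_eq_left h2.le
    rw [this]
    positivity
  -- variance formula
  have hVar : variance X P = ∫ ω, (X ω - m) ^ 2 ∂P := variance_eq_integral hX.1.aemeasurable
  -- every element of the set is at least U + δ/(2θ)
  have hlb : ∀ r ∈ {r : ℝ | ∃ Y : Ω → ℝ, MemLp Y 2 P ∧ (∀ᵐ ω ∂P, 0 ≤ Y ω) ∧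
      (∫ ω, Y ω ∂P = 1) ∧
      r = ∫ ω, (X ω * Y ω + (Y ω) ^ 2 / (2 * θ) - 1 / (2 * θ)) ∂P},
      m - θ / 2 * variance X P + δ / (2 * θ) ≤ r := by
    rintro r ⟨Y, hY, hYpos, hYmean, rfl⟩
    have hYint : Integrable Y P := hY.integrable one_le_two
    have hY2 : Integrable (fun ω => Y ω ^ 2) P := hY.integrable_sq
    set W : Ω → ℝ := fun ω => Y ω - 1 + θ * (X ω - m) with hWdef
    have hW : MemLp W 2 P := (hY.sub (memLp_const 1)).add (hXm.const_mul θ)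
    have hW2 : Integrable (fun ω => W ω ^ 2) P := hW.integrable_sq
    -- key identity
    have e1 : ∀ ω, X ω * Y ω + (Y ω) ^ 2 / (2 * θ) - 1 / (2 * θ)
        = W ω ^ 2 / (2 * θ)
          + (m * Y ω + Y ω / θ + ((X ω - m) - θ / 2 * (X ω - m) ^ 2 - 1 / θ)) := by
      intro ω
      simp only [hWdef]
      field_simp
      ring
    have hint1 : Integrable (fun ω => W ω ^ 2 / (2 * θ)) P := hW2.div_const _
    have hint2 : Integrable
        (fun ω => m * Y ω + Y ω / θ + ((X ω - m) - θ / 2 * (X ω - m) ^ 2 - 1 / θ)) P :=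
      ((hYint.const_mul m).add (hYint.div_const θ)).add
        ((hXmint.sub (hXm2.const_mul (θ / 2))).sub (integrable_const (1 / θ)))
    have hsplit : ∫ ω, (X ω * Y ω + (Y ω) ^ 2 / (2 * θ) - 1 / (2 * θ)) ∂P
        = (∫ ω, W ω ^ 2 ∂P) / (2 * θ) + (m - θ / 2 * ∫ ω, (X ω - m) ^ 2 ∂P) := by
      rw [show (fun ω => X ω * Y ω + (Y ω) ^ 2 / (2 * θ) - 1 / (2 * θ))
          = fun ω => W ω ^ 2 / (2 * θ)
            + (m * Y ω + Y ω / θ + ((X ω - m) - θ / 2 * (X ω - m) ^ 2 - 1 / θ)) from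
        funext e1]
      have hA : Integrable (fun ω => m * Y ω + Y ω / θ) P :=
        (hYint.const_mul m).add (hYint.div_const θ)
      have hB : Integrable (fun ω => (X ω - m) - θ / 2 * (X ω - m) ^ 2 - 1 / θ) P :=
        (hXmint.sub (hXm2.const_mul (θ / 2))).sub (integrable_const (1 / θ))
      have hC : Integrable (fun ω => (X ω - m) - θ / 2 * (X ω - m) ^ 2) P :=
        hXmint.sub (hXm2.const_mul (θ / 2))
      rw [integral_add hint1 hint2, integral_div,
        integral_add hA hB,
        integral_add (hYint.const_mul m) (hYint.div_const θ),
        integral_sub hC (integrable_const (1 / θ)),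
        integral_sub hXmint (hXm2.const_mul (θ / 2)),
        integral_const_mul, integral_const_mul, integral_div,
        integral_sub hXint (integrable_const m), integral_const]
      rw [integral_const]
      simp only [measure_univ, probReal_univ, ENNReal.toReal_one, one_smul, smul_eq_mul, hYmean, ← hm]
      ring
    rw [hsplit, hVar]
    have hmono : δ ≤ ∫ ω, W ω ^ 2 ∂P := by
      rw [hδ]
      refine integral_mono_ae hg2 hW2 ?_
      filter_upwards [hYpos] with ω hy
      simp only [hgdef, hWdef]
      rcases le_or_gt (θ * (X ω - m) - 1) 0 with h | h
      · rw [max_eq_right h]; simpa using sq_nonneg _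
      · rw [max_eq_left h.le]
        have h1 : θ * (X ω - m) - 1 ≤ Y ω - 1 + θ * (X ω - m) := by linarith
        exact pow_le_pow_left₀ h.le h1 2
    have hdiv : δ / (2 * θ) ≤ (∫ ω, W ω ^ 2 ∂P) / (2 * θ) := by gcongr
    linarith
  -- the set is nonempty: Y = 1
  have hne : {r : ℝ | ∃ Y : Ω → ℝ, MemLp Y 2 P ∧ (∀ᵐ ω ∂P, 0 ≤ Y ω) ∧
      (∫ ω, Y ω ∂P = 1) ∧
      r = ∫ ω, (X ω * Y ω + (Y ω) ^ 2 / (2 * θ) - 1 / (2 * θ)) ∂P}.Nonempty := by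
    refine ⟨m, fun _ => 1, memLp_const 1, Filter.Eventually.of_forall fun _ => zero_le_one, ?_, ?_⟩
    · simp
    · rw [show (fun ω => X ω * 1 + (1:ℝ) ^ 2 / (2 * θ) - 1 / (2 * θ)) = fun ω => X ω from
        funext fun ω => by ring]
  have hstep : m - θ / 2 * variance X P < m - θ / 2 * variance X P + δ / (2 * θ) := by
    have : 0 < δ / (2 * θ) := by positivity
    linarith
  exact lt_of_lt_of_le hstep (le_csInf hne hlb)
end

section
/- Let M^{2,s} ⊆ L²(P) be the set of signed martingale densities and M its minimal-norm element with E[M²] > 0. Let λ ≠ x₀ and suppose X̃_T = λ − ỹ·g̃ for some admissible terminal wealth X̃_T (i.e. E[(X̃_T − x₀)g] = 0 for all g ∈ M^{2,s}) and some g̃ ∈ M^{2,s}, ỹ ∈ ℝ. Then ỹ = (λ − x₀)/E[M²], g̃ = M, and X̃_T minimizes E[(X_T − λ)²] over admissible terminal wealths with initial capital x₀. -/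
open MeasureTheory ProbabilityTheory

/-- Lemma on the auxiliary quadratic problem: if an admissible terminal wealth has the
form `X̃_T = λ − ỹ g̃` with `g̃ ∈ 𝓜^{2,s}`, then `ỹ = (λ − x₀)/E[M²]`, `g̃ = M` (the
variance-optimal signed martingale measure), and `X̃_T` minimizes `E[(X_T − λ)²]` over
admissible terminal wealths with initial capital `x₀`. -/
theorem stmt_11 {Ω : Type*} [MeasurableSpace Ω] (P : Measure Ω) [IsProbabilityMeasure P]
    (K : Submodule ℝ (Lp ℝ 2 P)) (hK : IsClosed (K : Set (Lp ℝ 2 P)))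
    (Ms : Set (Lp ℝ 2 P))
    (hMs : Ms = {g : Lp ℝ 2 P | (∫ ω, g ω ∂P = 1) ∧ ∀ f ∈ K, ∫ ω, g ω * f ω ∂P = 0})
    (M : Lp ℝ 2 P) (hMmem : M ∈ Ms)
    (hMmin : ∀ g ∈ Ms, ∫ ω, (M ω) ^ 2 ∂P ≤ ∫ ω, (g ω) ^ 2 ∂P)
    (hM2pos : 0 < ∫ ω, (M ω) ^ 2 ∂P)
    (lam x₀ : ℝ) (hlam : lam ≠ x₀)
    (Xt : Lp ℝ 2 P)
    (hadm : ∀ g ∈ Ms, ∫ ω, (Xt ω - x₀) * g ω ∂P = 0)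
    (yt : ℝ) (gt : Lp ℝ 2 P) (hgt : gt ∈ Ms)
    (hform : ∀ᵐ ω ∂P, Xt ω = lam - yt * gt ω) :
    yt = (lam - x₀) / ∫ ω, (M ω) ^ 2 ∂P ∧ gt = M ∧
    ∀ X : Lp ℝ 2 P, (∀ g ∈ Ms, ∫ ω, (X ω - x₀) * g ω ∂P = 0) →
      ∫ ω, (Xt ω - lam) ^ 2 ∂P ≤ ∫ ω, (X ω - lam) ^ 2 ∂P := by
  have hint : ∀ f g : Lp ℝ 2 P, Integrable (fun ω => f ω * g ω) P := by
    intro f g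
    have := MeasureTheory.L2.integrable_inner (𝕜 := ℝ) f g
    simpa [RCLike.inner_apply, conj_trivial, mul_comm] using this
  have hint1 : ∀ f : Lp ℝ 2 P, Integrable (fun ω => f ω) P := fun f =>
    (Lp.memLp f).integrable one_le_two
  have hgt1 : ∫ ω, gt ω ∂P = 1 := by rw [hMs] at hgt; exact hgt.1
  have hM1 : ∫ ω, M ω ∂P = 1 := by rw [hMs] at hMmem; exact hMmem.1
  -- key identity: for g ∈ Ms, yt * ∫ gt*g = lam - x₀
  have key : ∀ g ∈ Ms, yt * ∫ ω, gt ω * g ω ∂P = lam - x₀ := by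
    intro g hg
    have hg1 : ∫ ω, g ω ∂P = 1 := by rw [hMs] at hg; exact hg.1
    have h0 := hadm g hg
    have hcong : (fun ω => (Xt ω - x₀) * g ω)
        =ᵐ[P] fun ω => (lam - x₀) * g ω - yt * (gt ω * g ω) := by
      filter_upwards [hform] with ω hω
      rw [hω]; ring
    rw [integral_congr_ae hcong,
      integral_sub ((hint1 g).const_mul _) ((hint gt g).const_mul _),
      integral_const_mul, integral_const_mul, hg1, mul_one] at h0
    linarith
  have h1 : yt * ∫ ω, gt ω * gt ω ∂P = lam - x₀ := key gt hgt
  have h2 : yt * ∫ ω, gt ω * M ω ∂P = lam - x₀ := key M hMmem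
  have hyt0 : yt ≠ 0 := by
    intro h; rw [h, zero_mul] at h1
    exact hlam (by linarith)
  have hgtsq : ∫ ω, gt ω * gt ω ∂P = ∫ ω, (gt ω) ^ 2 ∂P := by
    congr 1; funext ω; ring
  have hMsq : ∫ ω, M ω * M ω ∂P = ∫ ω, (M ω) ^ 2 ∂P := by
    congr 1; funext ω; ring
  have hcross : ∫ ω, gt ω * M ω ∂P = ∫ ω, (gt ω) ^ 2 ∂P := by
    rw [← hgtsq]; exact mul_left_cancel₀ hyt0 (h2.trans h1.symm)
  -- ∫(M - gt)² = ∫M² - ∫gt²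
  have hsqdiff : ∫ ω, (M ω - gt ω) ^ 2 ∂P
      = (∫ ω, (M ω) ^ 2 ∂P) - ∫ ω, (gt ω) ^ 2 ∂P := by
    have he : (fun ω => (M ω - gt ω) ^ 2)
        = fun ω => M ω * M ω - 2 * (gt ω * M ω) + gt ω * gt ω := by
      funext ω; ring
    have e1 : ∫ ω, (M ω * M ω - 2 * (gt ω * M ω) + gt ω * gt ω) ∂P
        = (∫ ω, (M ω * M ω - 2 * (gt ω * M ω)) ∂P) + ∫ ω, gt ω * gt ω ∂P :=
      integral_add (Integrable.sub (hint M M) ((hint gt M).const_mul 2)) (hint gt gt)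
    have e2 : ∫ ω, (M ω * M ω - 2 * (gt ω * M ω)) ∂P
        = (∫ ω, M ω * M ω ∂P) - ∫ ω, 2 * (gt ω * M ω) ∂P :=
      integral_sub (hint M M) ((hint gt M).const_mul 2)
    rw [he, e1, e2, integral_const_mul, hMsq, hgtsq, hcross]
    ring
  have hle : ∫ ω, (M ω) ^ 2 ∂P ≤ ∫ ω, (gt ω) ^ 2 ∂P := hMmin gt hgt
  have hnn : 0 ≤ ∫ ω, (M ω - gt ω) ^ 2 ∂P :=
    integral_nonneg fun ω => sq_nonneg _
  have hzero : ∫ ω, (M ω - gt ω) ^ 2 ∂P = 0 := le_antisymm (by linarith) hnn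
  have hidiff : Integrable (fun ω => (M ω - gt ω) ^ 2) P := by
    have he : (fun ω => (M ω - gt ω) ^ 2)
        = fun ω => M ω * M ω - 2 * (gt ω * M ω) + gt ω * gt ω := by
      funext ω; ring
    rw [he]
    exact (Integrable.sub (hint M M) ((hint gt M).const_mul 2)).add (hint gt gt)
  have haez : (fun ω => (M ω - gt ω) ^ 2) =ᵐ[P] 0 :=
    (integral_eq_zero_iff_of_nonneg_ae (Filter.Eventually.of_forall fun ω => sq_nonneg _)
      hidiff).mp hzero
  have hgtM : gt = M := by
    refine (Lp.ext ?_).symm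
    filter_upwards [haez] with ω hω
    have h0 : M ω - gt ω = 0 := by
      have h := hω
      simp only [Pi.zero_apply] at h
      exact pow_eq_zero_iff two_ne_zero |>.mp h
    linarith
  have hEeq : ∫ ω, (gt ω) ^ 2 ∂P = ∫ ω, (M ω) ^ 2 ∂P := by rw [hgtM]
  have hytval : yt = (lam - x₀) / ∫ ω, (M ω) ^ 2 ∂P := by
    rw [eq_div_iff (ne_of_gt hM2pos), ← hEeq, ← hgtsq]; exact h1
  refine ⟨hytval, hgtM, ?_⟩
  intro X hX
  -- cross term: ∫ (X - Xt) * gt = 0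
  have hXgt : ∫ ω, (X ω - x₀) * gt ω ∂P = 0 := hX gt hgt
  have hXtgt : ∫ ω, (Xt ω - x₀) * gt ω ∂P = 0 := hadm gt hgt
  have hcross0 : ∫ ω, (X ω - Xt ω) * gt ω ∂P = 0 := by
    have he : (fun ω => (X ω - Xt ω) * gt ω)
        = fun ω => (X ω - x₀) * gt ω - (Xt ω - x₀) * gt ω := by
      funext ω; ring
    have hiX : Integrable (fun ω => (X ω - x₀) * gt ω) P := by
      have he2 : (fun ω => (X ω - x₀) * gt ω)
          = fun ω => X ω * gt ω - x₀ * gt ω := by funext ω; ring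
      rw [he2]; exact (hint X gt).sub ((hint1 gt).const_mul _)
    have hiXt : Integrable (fun ω => (Xt ω - x₀) * gt ω) P := by
      have he2 : (fun ω => (Xt ω - x₀) * gt ω)
          = fun ω => Xt ω * gt ω - x₀ * gt ω := by funext ω; ring
      rw [he2]; exact (hint Xt gt).sub ((hint1 gt).const_mul _)
    rw [he, integral_sub hiX hiXt, hXgt, hXtgt, sub_zero]
  -- ∫(Xt - lam)² = yt² ∫gt²
  have hXtval : ∫ ω, (Xt ω - lam) ^ 2 ∂P = yt ^ 2 * ∫ ω, (gt ω) ^ 2 ∂P := by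
    have hcong : (fun ω => (Xt ω - lam) ^ 2)
        =ᵐ[P] fun ω => yt ^ 2 * (gt ω) ^ 2 := by
      filter_upwards [hform] with ω hω
      rw [hω]; ring
    rw [integral_congr_ae hcong, integral_const_mul]
  -- expansion of ∫(X - lam)²
  have hIA : Integrable (fun ω => (X ω - Xt ω) ^ 2) P := by
    have he : (fun ω => (X ω - Xt ω) ^ 2)
        = fun ω => X ω * X ω - 2 * (X ω * Xt ω) + Xt ω * Xt ω := by funext ω; ring
    rw [he]
    exact (Integrable.sub (hint X X) ((hint X Xt).const_mul 2)).add (hint Xt Xt)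
  have hIB : Integrable (fun ω => (-2 * yt) * ((X ω - Xt ω) * gt ω)) P := by
    have he : (fun ω => (-2 * yt) * ((X ω - Xt ω) * gt ω))
        = fun ω => (-2 * yt) * (X ω * gt ω) - (-2 * yt) * (Xt ω * gt ω) := by
      funext ω; ring
    rw [he]
    exact ((hint X gt).const_mul _).sub ((hint Xt gt).const_mul _)
  have hIB' : Integrable (fun ω => (X ω - Xt ω) * gt ω) P := by
    have he : (fun ω => (X ω - Xt ω) * gt ω)
        = fun ω => X ω * gt ω - Xt ω * gt ω := by funext ω; ring
    rw [he]; exact (hint X gt).sub (hint Xt gt)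
  have hIC : Integrable (fun ω => yt ^ 2 * (gt ω) ^ 2) P := by
    have he : (fun ω => yt ^ 2 * (gt ω) ^ 2)
        = fun ω => yt ^ 2 * (gt ω * gt ω) := by funext ω; ring
    rw [he]; exact (hint gt gt).const_mul _
  have hXexp : ∫ ω, (X ω - lam) ^ 2 ∂P
      = (∫ ω, (X ω - Xt ω) ^ 2 ∂P) + yt ^ 2 * ∫ ω, (gt ω) ^ 2 ∂P := by
    have hcong : (fun ω => (X ω - lam) ^ 2)
        =ᵐ[P] fun ω => (X ω - Xt ω) ^ 2 + (-2 * yt) * ((X ω - Xt ω) * gt ω)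
          + yt ^ 2 * (gt ω) ^ 2 := by
      filter_upwards [hform] with ω hω
      rw [hω]; ring
    have e1 : ∫ ω, ((X ω - Xt ω) ^ 2 + (-2 * yt) * ((X ω - Xt ω) * gt ω)
          + yt ^ 2 * (gt ω) ^ 2) ∂P
        = (∫ ω, ((X ω - Xt ω) ^ 2 + (-2 * yt) * ((X ω - Xt ω) * gt ω)) ∂P)
          + ∫ ω, yt ^ 2 * (gt ω) ^ 2 ∂P :=
      integral_add (hIA.add hIB) hIC
    have e2 : ∫ ω, ((X ω - Xt ω) ^ 2 + (-2 * yt) * ((X ω - Xt ω) * gt ω)) ∂P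
        = (∫ ω, (X ω - Xt ω) ^ 2 ∂P) + ∫ ω, (-2 * yt) * ((X ω - Xt ω) * gt ω) ∂P :=
      integral_add hIA hIB
    have e3 : ∫ ω, (-2 * yt) * ((X ω - Xt ω) * gt ω) ∂P
        = (-2 * yt) * ∫ ω, (X ω - Xt ω) * gt ω ∂P := integral_const_mul _ _
    rw [integral_congr_ae hcong, e1, e2, e3, hcross0, integral_const_mul]
    ring
  have hAnn : 0 ≤ ∫ ω, (X ω - Xt ω) ^ 2 ∂P := integral_nonneg fun ω => sq_nonneg _
  rw [hXtval, hXexp]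
  linarith
end

section
/- Let K₂ be a closed subspace of L²(P), M^{2,s} = {g ∈ L² : E[g]=1, E[gf]=0 ∀f ∈ K₂} nonempty, M the minimal-norm element of M^{2,s}, and assume the dual relationship f ∈ K₂ ⟺ E[fg]=0 for all g ∈ M^{2,s}. Then for any λ, x₀ ∈ ℝ, the random variable X_T^{λ,*} = λ − ((λ−x₀)/E[M²])·M satisfies X_T^{λ,*} − x₀ ∈ K₂, i.e. it is an attainable terminal wealth. -/
open MeasureTheory ProbabilityTheory

/-- Attainability of the candidate optimal wealth: under the dual relationship
`f ∈ K₂ ⟺ E[fg] = 0 ∀ g ∈ 𝓜^{2,s}`, the claim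
`X_T^{λ,*} = λ − ((λ − x₀)/E[M²]) M` differs from `x₀` by an element of `K₂`. -/
theorem stmt_12 {Ω : Type*} [MeasurableSpace Ω] (P : Measure Ω) [IsProbabilityMeasure P]
    (K : Submodule ℝ (Lp ℝ 2 P)) (hK : IsClosed (K : Set (Lp ℝ 2 P)))
    (Ms : Set (Lp ℝ 2 P))
    (hMs : Ms = {g : Lp ℝ 2 P | (∫ ω, g ω ∂P = 1) ∧ ∀ f ∈ K, ∫ ω, g ω * f ω ∂P = 0})
    (hMsne : Ms.Nonempty)
    (M : Lp ℝ 2 P) (hMmem : M ∈ Ms)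
    (hMmin : ∀ g ∈ Ms, ∫ ω, (M ω) ^ 2 ∂P ≤ ∫ ω, (g ω) ^ 2 ∂P)
    (hdual : ∀ f : Lp ℝ 2 P, f ∈ K ↔ ∀ g ∈ Ms, ∫ ω, f ω * g ω ∂P = 0)
    (lam x₀ : ℝ) :
    ∃ f ∈ K, ∀ᵐ ω ∂P,
      x₀ + f ω = lam - (lam - x₀) / (∫ ω', (M ω') ^ 2 ∂P) * M ω := by
  classical
  -- basic integrability facts
  have hint : ∀ f g : Lp ℝ 2 P, Integrable (fun ω => f ω * g ω) P := by
    intro f g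
    have := L2.integrable_inner (𝕜 := ℝ) g f
    simpa [RCLike.inner_apply] using this
  have hintf : ∀ f : Lp ℝ 2 P, Integrable (fun ω => f ω) P := fun f =>
    (Lp.memLp f).integrable (by norm_num)
  have hisq : Integrable (fun ω => (M ω) ^ 2) P := (Lp.memLp M).integrable_sq
  set E : ℝ := ∫ ω', (M ω') ^ 2 ∂P with hE
  have hMmem' := hMmem
  rw [hMs] at hMmem'
  obtain ⟨hM1, hMorth⟩ := hMmem'
  -- E ≠ 0
  have hEne : E ≠ 0 := by
    intro h0
    have h0' : ∫ ω, (M ω) ^ 2 ∂P = 0 := by rw [← hE]; exact h0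
    have hz : ∀ᵐ ω ∂P, (M ω) ^ 2 = 0 := by
      have := (integral_eq_zero_iff_of_nonneg_ae
        (Filter.Eventually.of_forall fun ω => sq_nonneg (M ω)) hisq).1 h0'
      filter_upwards [this] with ω hω
      simpa using hω
    have hz' : ∫ ω, M ω ∂P = 0 := by
      rw [integral_congr_ae (g := fun _ => (0:ℝ))]
      · simp
      · filter_upwards [hz] with ω hω
        exact pow_eq_zero_iff (n := 2) (by norm_num) |>.1 hω
    rw [hM1] at hz'
    norm_num at hz'
  -- key identity : E[M g] = E[M²] for all g ∈ Ms
  have key : ∀ g ∈ Ms, ∫ ω, M ω * g ω ∂P = E := by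
    intro g hg
    have hg' := hg
    rw [hMs] at hg'
    obtain ⟨hg1, hgorth⟩ := hg'
    have hsub := Lp.coeFn_sub g M
    have hiMu : Integrable (fun ω => M ω * (g ω - M ω)) P := by
      refine (hint M (g - M)).congr ?_
      filter_upwards [hsub] with ω hω
      rw [hω]; rfl
    have hiu2 : Integrable (fun ω => (g ω - M ω) ^ 2) P := by
      refine ((Lp.memLp (g - M)).integrable_sq).congr ?_
      filter_upwards [hsub] with ω hω
      rw [hω]; rfl
    set a : ℝ := ∫ ω, M ω * (g ω - M ω) ∂P with ha
    set b : ℝ := ∫ ω, (g ω - M ω) ^ 2 ∂P with hb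
    have hb0 : 0 ≤ b := integral_nonneg fun ω => sq_nonneg _
    -- affine combinations stay in Ms
    have hco : ∀ t : ℝ, ((M + t • (g - M)) : Lp ℝ 2 P) =ᵐ[P]
        fun ω => M ω + t * (g ω - M ω) := by
      intro t
      filter_upwards [Lp.coeFn_add M (t • (g - M)), Lp.coeFn_smul t (g - M),
        Lp.coeFn_sub g M] with ω h1 h2 h3
      rw [h1]; simp only [Pi.add_apply]
      rw [h2]; simp only [Pi.smul_apply, smul_eq_mul]
      rw [h3]; rfl
    have haff : ∀ t : ℝ, (M + t • (g - M)) ∈ Ms := by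
      intro t
      rw [hMs]
      constructor
      · have : ∫ ω, (M + t • (g - M)) ω ∂P
            = ∫ ω, (M ω + t * (g ω - M ω)) ∂P := integral_congr_ae (hco t)
        rw [this]
        have hi1 : Integrable (fun ω => t * (g ω - M ω)) P :=
          (((hintf g).sub (hintf M)).const_mul t)
        rw [integral_add (hintf M) hi1, integral_const_mul,
          integral_sub (hintf g) (hintf M), hg1, hM1]
        simp
      · intro f hf
        have : ∫ ω, (M + t • (g - M)) ω * f ω ∂P
            = ∫ ω, (M ω * f ω + t * (g ω * f ω) - t * (M ω * f ω)) ∂P := by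
          refine integral_congr_ae ?_
          filter_upwards [hco t] with ω hω
          rw [hω]; ring
        have hA : Integrable (fun ω => M ω * f ω + t * (g ω * f ω)) P :=
          (hint M f).add ((hint g f).const_mul t)
        have hB : Integrable (fun ω => t * (M ω * f ω)) P :=
          (hint M f).const_mul t
        rw [this, integral_sub hA hB,
          integral_add (hint M f) ((hint g f).const_mul t),
          integral_const_mul, integral_const_mul, hMorth f hf, hgorth f hf]
        ring
    -- quadratic expansion of the norm
    have hquad : ∀ t : ℝ, 0 ≤ 2 * t * a + t ^ 2 * b := by
      intro t
      have hmem := hMmin _ (haff t)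
      have hexp : ∫ ω, ((M + t • (g - M)) ω) ^ 2 ∂P
          = E + (2 * t * a + t ^ 2 * b) := by
        have h1 : (fun ω => ((M + t • (g - M)) ω) ^ 2) =ᵐ[P]
            fun ω => (M ω) ^ 2 + (2 * t) * (M ω * (g ω - M ω))
              + t ^ 2 * ((g ω - M ω) ^ 2) := by
          filter_upwards [hco t] with ω hω
          rw [hω]; ring
        have hA : Integrable (fun ω => (M ω) ^ 2 + 2 * t * (M ω * (g ω - M ω))) P :=
          hisq.add (hiMu.const_mul (2 * t))
        have hB : Integrable (fun ω => t ^ 2 * ((g ω - M ω) ^ 2)) P :=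
          hiu2.const_mul (t ^ 2)
        rw [integral_congr_ae h1, integral_add hA hB,
          integral_add hisq (hiMu.const_mul (2 * t)),
          integral_const_mul, integral_const_mul]
        ring
      rw [hexp] at hmem
      linarith
    -- conclude a = 0
    have ha0 : a = 0 := by
      by_contra hne
      have ht := hquad (-a / (b + 1))
      have hbp : (0:ℝ) < b + 1 := by linarith
      have ha2 : 0 < a ^ 2 := by positivity
      have h1 : 2 * (-a / (b + 1)) * a + (-a / (b + 1)) ^ 2 * b
          = (a ^ 2 * (-(b + 2))) / (b + 1) ^ 2 := by
        field_simp
        ring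
      rw [h1] at ht
      have hpos : (0:ℝ) < (b + 1) ^ 2 := by positivity
      rw [le_div_iff₀ hpos, zero_mul] at ht
      nlinarith [ha2, hb0, ht]
    -- expand a
    have : a = (∫ ω, M ω * g ω ∂P) - E := by
      rw [ha]
      have h2 : (fun ω => M ω * (g ω - M ω)) =ᵐ[P]
          fun ω => M ω * g ω - (M ω) ^ 2 :=
        Filter.Eventually.of_forall fun ω => by ring
      rw [integral_congr_ae h2, integral_sub (hint M g) hisq]
    rw [this] at ha0
    linarith
  -- construct the attainable element
  set c : ℝ := lam - x₀ with hc
  set d : ℝ := c / E with hd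
  set f : Lp ℝ 2 P := (memLp_const c).toLp (fun _ => c) - d • M with hfdef
  have hfco : (f : Ω → ℝ) =ᵐ[P] fun ω => c - d * M ω := by
    filter_upwards [Lp.coeFn_sub ((memLp_const c).toLp (fun _ => c)) (d • M),
      (memLp_const c).coeFn_toLp, Lp.coeFn_smul d M] with ω h1 h2 h3
    rw [h1]; simp only [Pi.sub_apply]
    rw [h2, h3]; rfl
  refine ⟨f, ?_, ?_⟩
  · rw [hdual]
    intro g hg
    have hg' := hg
    rw [hMs] at hg'
    obtain ⟨hg1, _⟩ := hg'
    have : ∫ ω, f ω * g ω ∂P = ∫ ω, (c * g ω - d * (M ω * g ω)) ∂P := by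
      refine integral_congr_ae ?_
      filter_upwards [hfco] with ω hω
      rw [hω]; ring
    have hA : Integrable (fun ω => c * g ω) P := (hintf g).const_mul c
    have hB : Integrable (fun ω => d * (M ω * g ω)) P := (hint M g).const_mul d
    rw [this, integral_sub hA hB,
      integral_const_mul, integral_const_mul, hg1, key g hg]
    rw [hd]
    field_simp
    ring
  · filter_upwards [hfco] with ω hω
    rw [hω, hd, hc]
    ring
end
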